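/- arXiv:1507.02324 — 2 statements merged into one kernel-verified Lean document; each statement's English description precedes it below -/
import Mathlib

section
/- If I is a nontrivial right ideal of W(2), then I is contained in the subspace span_F{e₄, e₅ − 2e₁ − 3e₈, e₃ + e₆, e₃ + e₇} (the left annihilator of W(2)). -/
noncomputable section

variable (F : Type*) [Field F] [CharZero F]

abbrev V2 (F : Type*) [Field F] : Type _ := Fin 2 → F

abbrev WW (F : Type*) [Field F] : Type _ := V2 F →ₗ[F] V2 F →ₗ[F] V2 F

def vone : V2 F := ![1, 0]

/-- The multiplication on the space of bilinear maps. -/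
def wmul (A B : WW F) : WW F :=
  LinearMap.mk₂ F
    (fun x y => A (vone F) (B x y) - B (A (vone F) x) y - B x (A (vone F) y))
    (fun x x' y => by simp only [map_add, LinearMap.add_apply]; abel)
    (fun c x y => by simp only [map_smul, LinearMap.smul_apply, smul_sub])
    (fun x y y' => by simp only [map_add, LinearMap.add_apply]; abel)
    (fun c x y => by simp only [map_smul, LinearMap.smul_apply, smul_sub])

/-- α_{ij}^k -/
def alphaM (i j k : Fin 2) : WW F :=
  LinearMap.mk₂ F (fun x y => (x i * y j) • (Pi.single k (1 : F) : V2 F))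
    (fun x x' y => by simp [add_mul, add_smul])
    (fun c x y => by simp [smul_smul, mul_assoc])
    (fun x y y' => by simp [mul_add, add_smul])
    (fun c x y => by simp [smul_smul, mul_assoc, mul_left_comm])

/-- The basis e₁, …, e₈ of W(2) (indexed 0,…,7). -/
def bE : Fin 8 → WW F :=
  ![alphaM F 0 0 0 - alphaM F 0 1 1 - alphaM F 1 0 1,
    alphaM F 0 0 1,
    alphaM F 1 1 1 - alphaM F 0 1 0 - alphaM F 1 0 0,
    alphaM F 1 1 0,
    (2 : F) • alphaM F 0 0 0 + alphaM F 0 1 1 + alphaM F 1 0 1,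
    (2 : F) • alphaM F 1 1 1 + alphaM F 0 1 0 + alphaM F 1 0 0,
    alphaM F 0 1 0 - alphaM F 1 0 0,
    alphaM F 0 1 1 - alphaM F 1 0 1]

-- auxiliary

def EE (j : Fin 2) : V2 F := Pi.single j 1

lemma EE_zero : EE F 0 = vone F := by
  funext k; fin_cases k <;> simp [EE, vone]

lemma v2_decomp (v : V2 F) : v = v 0 • EE F 0 + v 1 • EE F 1 := by
  funext k; fin_cases k <;> simp [EE]

lemma ww_ext {A B : WW F} (h : ∀ i j : Fin 2, A (EE F i) (EE F j) = B (EE F i) (EE F j)) :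
    A = B := by
  apply Module.Basis.ext (Pi.basisFun F (Fin 2))
  intro i
  apply Module.Basis.ext (Pi.basisFun F (Fin 2))
  intro j
  simpa [EE, Pi.basisFun_apply] using h i j

lemma wmul_apply (A B : WW F) (a b : V2 F) :
    wmul F A B a b =
      A (vone F) (B a b) - B (A (vone F) a) b - B a (A (vone F) b) := rfl

lemma alphaM_apply (i j k : Fin 2) (a b : V2 F) :
    alphaM F i j k a b = (a i * b j) • (Pi.single k (1 : F) : V2 F) := rfl

lemma yα_apply (a b : V2 F) :
    (alphaM F 0 0 0 + alphaM F 0 1 1) a b = a 0 • b := by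
  funext k; fin_cases k <;> simp [alphaM_apply, Pi.single_apply] <;> ring

lemma yβ_apply (a b : V2 F) :
    (alphaM F 1 0 0 + alphaM F 1 1 1) a b = a 1 • b := by
  funext k; fin_cases k <;> simp [alphaM_apply, Pi.single_apply] <;> ring

lemma vone_zero : vone F 0 = 1 := rfl
lemma vone_one : vone F 1 = 0 := rfl

/-- scalar2: multiplying by α₀₀⁰+α₀₁¹ produces an element acting as −d₀₀ on V₂. -/
lemma scalar2 (x : WW F) (v : V2 F) :
    (wmul F x (alphaM F 0 0 0 + alphaM F 0 1 1)) (vone F) v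
      = (-(x (vone F) (vone F) 0)) • v := by
  rw [wmul_apply, yα_apply, yα_apply, yα_apply, vone_zero]
  simp only [one_smul]
  module

/-- scalar1 -/
lemma scalar1 (x : WW F) (h : x (vone F) (vone F) 1 ≠ 0) (v : V2 F) :
    (wmul F x ((-(x (vone F) (vone F) 1)⁻¹ : F) • (alphaM F 1 0 0 + alphaM F 1 1 1)))
      (vone F) v = v := by
  rw [wmul_apply]
  simp only [LinearMap.smul_apply, yβ_apply, vone_one, zero_smul, smul_zero, map_zero,
    smul_smul]
  rw [neg_mul, inv_mul_cancel₀ h]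
  module

lemma z3_comp0 (x : WW F) :
    (wmul F x (alphaM F 0 0 1)) (vone F) (vone F) 0 = x (vone F) (EE F 1) 0 := by
  rw [wmul_apply]
  simp [alphaM_apply, vone_zero, EE, Pi.single_apply, vone]

lemma z3_comp1 (x : WW F) :
    (wmul F x (alphaM F 0 0 1)) (vone F) (vone F) 1
      = x (vone F) (EE F 1) 1 - 2 * (x (vone F) (vone F) 0) := by
  rw [wmul_apply]
  simp [alphaM_apply, vone_zero, EE, Pi.single_apply, vone]
  ring

/-- if z acts like c•id on V₂ through vone, and c ≠ 0, the right ideal is everything. -/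
lemma top_of_scalar (I : Submodule F (WW F))
    (hI : ∀ x ∈ I, ∀ y : WW F, wmul F x y ∈ I)
    (z : WW F) (hzI : z ∈ I) (c : F) (hc : c ≠ 0)
    (hz : ∀ v : V2 F, z (vone F) v = c • v) (w : WW F) : w ∈ I := by
  have key : wmul F z ((-c)⁻¹ • w) = w := by
    apply ww_ext
    intro i j
    rw [wmul_apply]
    simp only [LinearMap.smul_apply, hz, map_smul]
    rw [smul_smul]
    have hcc : c * (-c)⁻¹ = -1 := by field_simp
    rw [hcc]
    module
  rw [← key]
  exact hI z hzI _

lemma ev_eq_zero (x : WW F)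
    (h00 : x (vone F) (vone F) 0 = 0) (h10 : x (vone F) (vone F) 1 = 0)
    (h01 : x (vone F) (EE F 1) 0 = 0) (h11 : x (vone F) (EE F 1) 1 = 0) :
    x (vone F) = 0 := by
  have h0 : x (vone F) (vone F) = 0 := by
    funext k; fin_cases k <;> assumption
  have h1 : x (vone F) (EE F 1) = 0 := by
    funext k; fin_cases k <;> assumption
  apply LinearMap.ext; intro v
  conv_lhs => rw [v2_decomp F v]
  rw [map_add, map_smul, map_smul, EE_zero, h0, h1]
  simp

lemma gen1_eq : bE F 3 = alphaM F 1 1 0 := rfl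

lemma gen2_eq : bE F 4 - (2:F) • bE F 0 - (3:F) • bE F 7 = (6:F) • alphaM F 1 0 1 := by
  show ((2 : F) • alphaM F 0 0 0 + alphaM F 0 1 1 + alphaM F 1 0 1)
    - (2:F) • (alphaM F 0 0 0 - alphaM F 0 1 1 - alphaM F 1 0 1)
    - (3:F) • (alphaM F 0 1 1 - alphaM F 1 0 1) = (6:F) • alphaM F 1 0 1
  module

lemma gen3_eq : bE F 2 + bE F 5 = (3:F) • alphaM F 1 1 1 := by
  show (alphaM F 1 1 1 - alphaM F 0 1 0 - alphaM F 1 0 0)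
    + ((2 : F) • alphaM F 1 1 1 + alphaM F 0 1 0 + alphaM F 1 0 0) = _
  module

lemma gen4_eq : bE F 2 + bE F 6 = alphaM F 1 1 1 - (2:F) • alphaM F 1 0 0 := by
  show (alphaM F 1 1 1 - alphaM F 0 1 0 - alphaM F 1 0 0)
    + (alphaM F 0 1 0 - alphaM F 1 0 0) = _
  module

set_option maxHeartbeats 1000000 in
lemma mem_span_of_ev_zero (x : WW F) (hev : x (vone F) = 0) :
    x ∈ Submodule.span F {bE F 3, bE F 4 - (2 : F) • bE F 0 - (3 : F) • bE F 7,
      bE F 2 + bE F 5, bE F 2 + bE F 6} := by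
  have h0 : x (Pi.single (0 : Fin 2) (1:F) : V2 F) = 0 := by
    have : (Pi.single (0 : Fin 2) (1:F) : V2 F) = vone F := EE_zero F
    rw [this]; exact hev
  have hx : x = (x (EE F 1) (EE F 1) 0) • bE F 3
      + (x (EE F 1) (EE F 0) 1 / 6) • (bE F 4 - (2 : F) • bE F 0 - (3 : F) • bE F 7)
      + (x (EE F 1) (EE F 0) 0 / 6 + x (EE F 1) (EE F 1) 1 / 3) • (bE F 2 + bE F 5)
      + (-(x (EE F 1) (EE F 0) 0) / 2) • (bE F 2 + bE F 6) := by
    rw [gen1_eq, gen2_eq, gen3_eq, gen4_eq]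
    apply ww_ext
    intro i j
    funext k
    fin_cases i <;> fin_cases j <;> fin_cases k <;>
      simp [alphaM_apply, EE, Pi.single_apply, h0] <;>
      first
        | rfl
        | ring
        | norm_num
        | (field_simp; try ring)
  rw [hx]
  have m1 : bE F 3 ∈ ({bE F 3, bE F 4 - (2 : F) • bE F 0 - (3 : F) • bE F 7,
      bE F 2 + bE F 5, bE F 2 + bE F 6} : Set (WW F)) := by left; rfl
  have m2 : bE F 4 - (2 : F) • bE F 0 - (3 : F) • bE F 7 ∈ ({bE F 3,
      bE F 4 - (2 : F) • bE F 0 - (3 : F) • bE F 7,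
      bE F 2 + bE F 5, bE F 2 + bE F 6} : Set (WW F)) := by right; left; rfl
  have m3 : bE F 2 + bE F 5 ∈ ({bE F 3, bE F 4 - (2 : F) • bE F 0 - (3 : F) • bE F 7,
      bE F 2 + bE F 5, bE F 2 + bE F 6} : Set (WW F)) := by right; right; left; rfl
  have m4 : bE F 2 + bE F 6 ∈ ({bE F 3, bE F 4 - (2 : F) • bE F 0 - (3 : F) • bE F 7,
      bE F 2 + bE F 5, bE F 2 + bE F 6} : Set (WW F)) := by right; right; right; rfl
  exact Submodule.add_mem _ (Submodule.add_mem _ (Submodule.add_mem _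
    (Submodule.smul_mem _ _ (Submodule.subset_span m1))
    (Submodule.smul_mem _ _ (Submodule.subset_span m2)))
    (Submodule.smul_mem _ _ (Submodule.subset_span m3)))
    (Submodule.smul_mem _ _ (Submodule.subset_span m4))

/-- Every nontrivial right ideal of W(2) is contained in
span{e₄, e₅ − 2e₁ − 3e₈, e₃ + e₆, e₃ + e₇}. -/
theorem statement1 (I : Submodule F (WW F))
    (hI : ∀ x ∈ I, ∀ y : WW F, wmul F x y ∈ I) (h0 : I ≠ ⊥) (h1 : I ≠ ⊤) :
    I ≤ Submodule.span F {bE F 3, bE F 4 - (2 : F) • bE F 0 - (3 : F) • bE F 7,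
      bE F 2 + bE F 5, bE F 2 + bE F 6} := by
  intro x hxI
  have hev : x (vone F) = 0 := by
    by_contra hne
    apply h1
    rw [Submodule.eq_top_iff']
    by_cases h10 : x (vone F) (vone F) 1 = 0
    · by_cases h00 : x (vone F) (vone F) 0 = 0
      · have hzI : wmul F x (alphaM F 0 0 1) ∈ I := hI x hxI _
        set z := wmul F x (alphaM F 0 0 1) with hzdef
        by_cases h11 : x (vone F) (EE F 1) 1 = 0
        · have h01 : x (vone F) (EE F 1) 0 ≠ 0 := fun h01 =>
            hne (ev_eq_zero F x h00 h10 h01 h11)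
          have hc : -(z (vone F) (vone F) 0) ≠ 0 := by
            rw [hzdef, z3_comp0]
            simpa using h01
          exact fun w => top_of_scalar F I hI _ (hI z hzI _) _ hc (scalar2 F z) w
        · have hz1 : z (vone F) (vone F) 1 ≠ 0 := by
            rw [hzdef, z3_comp1, h00]
            simpa using h11
          exact fun w => top_of_scalar F I hI _ (hI z hzI _) 1 one_ne_zero
            (fun v => by rw [one_smul]; exact scalar1 F z hz1 v) w
      · exact fun w => top_of_scalar F I hI _ (hI x hxI _) _
          (neg_ne_zero.mpr h00) (scalar2 F x) w
    · exact fun w => top_of_scalar F I hI _ (hI x hxI _) 1 one_ne_zero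
        (fun v => by rw [one_smul]; exact scalar1 F x h10 v) w
  exact mem_span_of_ev_zero F x hev

end
end

section
/- The algebra W(2) admits a nontrivial ternary derivation: there exist linear maps D, G, H : W(2) → W(2) with D(x·y) = G(x)·y + x·H(y) for all x, y ∈ W(2), such that not all of D, G, H are the sum of a derivation of W(2) and an element of the centroid of W(2). -/
noncomputable section

variable (F : Type*) [Field F] [CharZero F]

/-- A derivation of W(2). -/
def IsDerivation (d : WW F →ₗ[F] WW F) : Prop :=
  ∀ x y : WW F, d (wmul F x y) = wmul F (d x) y + wmul F x (d y)

/-- An element of the centroid of W(2). -/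
def IsCentroid (c : WW F →ₗ[F] WW F) : Prop :=
  ∀ x y : WW F, c (wmul F x y) = wmul F (c x) y ∧ c (wmul F x y) = wmul F x (c y)

/-- A map which is the sum of a derivation and an element of the centroid. -/
def IsDerPlusCentroid (T : WW F →ₗ[F] WW F) : Prop :=
  ∃ d c : WW F →ₗ[F] WW F, IsDerivation F d ∧ IsCentroid F c ∧ T = d + c


/-- The element e₀ = α₀₀⁰ − α₀₁¹ − α₁₀¹. -/
def myE0 : WW F := alphaM F 0 0 0 - alphaM F 0 1 1 - alphaM F 1 0 1

/-- The coordinate functional picking the α₁₁⁰-coefficient. -/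
def fE (X : WW F) : F := X ![0, 1] ![0, 1] 0

lemma fE_apply_add (X Y : WW F) : fE F (X + Y) = fE F X + fE F Y := by simp [fE]

lemma fE_apply_neg (X : WW F) : fE F (-X) = -fE F X := by simp [fE]

lemma single_one_eq : (Pi.single (1 : Fin 2) (1 : F) : V2 F) = ![0, 1] := by
  ext i; fin_cases i <;> simp

lemma wmul_e3 (B : WW F) : wmul F (alphaM F 1 1 0) B = 0 := by
  ext x y
  simp [wmul, alphaM, vone]

lemma wmul_smul_left (t : F) (A B : WW F) :
    wmul F (t • A) B = t • wmul F A B := by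
  ext x y
  simp [wmul, smul_sub]
  ring

lemma wmul_zero_right (A : WW F) : wmul F A 0 = 0 := by
  ext x y
  simp [wmul]

lemma fE_left (B : WW F) : fE F (wmul F B (myE0 F)) = 0 := by
  simp [fE, wmul, myE0, alphaM, vone]

lemma fE_right (B : WW F) : fE F (wmul F (myE0 F) B) = 3 * fE F B := by
  have h1 : (myE0 F) (vone F) (![0, 1] : V2 F) = -![0, 1] := by
    funext i; fin_cases i <;> simp [myE0, alphaM, vone]
  have h2 : ∀ w : V2 F, (myE0 F) (vone F) w 0 = w 0 := by
    intro w; simp [myE0, alphaM, vone]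
  show (wmul F (myE0 F) B) ![0, 1] ![0, 1] 0 = 3 * fE F B
  rw [wmul]
  simp only [LinearMap.mk₂_apply, Pi.sub_apply, h1, map_neg, LinearMap.neg_apply,
    Pi.neg_apply, h2]
  simp only [fE]
  ring

lemma myE0_sq : wmul F (myE0 F) (myE0 F) = -(myE0 F) := by
  ext x y k
  fin_cases k <;> simp [wmul, myE0, alphaM, vone] <;> ring

/-- The nontrivial component of the ternary derivation. -/
def Gmap : WW F →ₗ[F] WW F where
  toFun X := (X (vone F) (vone F) 0) • alphaM F 1 1 0
  map_add' X Y := by simp [add_smul]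
  map_smul' t X := by simp [smul_smul]

lemma Gmap_apply (X : WW F) :
    Gmap F X = (X (vone F) (vone F) 0) • alphaM F 1 1 0 := rfl

/-- W(2) admits a nontrivial ternary derivation. -/
theorem statement9 :
    ∃ D G H : WW F →ₗ[F] WW F,
      (∀ x y : WW F, D (wmul F x y) = wmul F (G x) y + wmul F x (H y)) ∧
      ¬(IsDerPlusCentroid F D ∧ IsDerPlusCentroid F G ∧ IsDerPlusCentroid F H) := by
  refine ⟨0, Gmap F, 0, ?_, ?_⟩
  · intro x y
    simp only [LinearMap.zero_apply, Gmap_apply, wmul_smul_left, wmul_e3,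
      wmul_zero_right, smul_zero, add_zero]
  · rintro ⟨-, ⟨d, c, hd, hc, hG⟩, -⟩
    have hdE := hd (myE0 F) (myE0 F)
    rw [myE0_sq] at hdE
    have hneg1 : d (-(myE0 F)) = -(d (myE0 F)) := map_neg d _
    rw [hneg1] at hdE
    have e1 := congrArg (fE F) hdE
    rw [fE_apply_neg, fE_apply_add, fE_left, fE_right] at e1
    have ht : fE F (d (myE0 F)) = 0 := by
      have h4 : (4 : F) * fE F (d (myE0 F)) = 0 := by linear_combination -e1
      exact (mul_eq_zero.mp h4).resolve_left (by norm_num)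
    have e2 := (hc (myE0 F) (myE0 F)).1
    rw [myE0_sq] at e2
    have hneg2 : c (-(myE0 F)) = -(c (myE0 F)) := map_neg c _
    rw [hneg2] at e2
    have e2' := congrArg (fE F) e2
    rw [fE_apply_neg, fE_left, neg_eq_zero] at e2'
    have e3 := congrArg (fun T : WW F →ₗ[F] WW F => fE F (T (myE0 F))) hG
    simp only [LinearMap.add_apply, fE_apply_add, ht, e2', add_zero] at e3
    rw [Gmap_apply] at e3
    have hval : (myE0 F) (vone F) (vone F) 0 = 1 := by
      simp [myE0, alphaM, vone]
    rw [hval, one_smul] at e3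
    have hfe3 : fE F (alphaM F 1 1 0) = 1 := by simp [fE, alphaM]
    rw [hfe3] at e3
    exact one_ne_zero e3


end
end
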